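/- Let H be a Hopf algebra over a field k and let P be a left H-comodule algebra with coinvariants N = P^{coH}. Suppose γ : H → P is a unital, left H-colinear, convolution-invertible linear map (a cleaving map). Then N ⊆ P is a left H-Galois extension, with translation map τ(h) = γ(h₍₁₎) ⊗_N γ⁻¹(h₍₂₎). -/
import Mathlib

set_option maxHeartbeats 1000000


open TensorProduct

noncomputable section

section Galois

variable (k : Type*) [Field k] (H : Type*) [Ring H] [Bialgebra k H]
  (P : Type*) [Ring P] [Algebra k P]

/-- Coinvariants of a left coaction. -/
def coinv (δ : P →ₗ[k] H ⊗[k] P) : Set P := {p : P | δ p = 1 ⊗ₜ[k] p}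

/-- Relations defining `P ⊗_N P` inside `P ⊗[k] P`. -/
def relN (δ : P →ₗ[k] H ⊗[k] P) : Submodule k (P ⊗[k] P) :=
  Submodule.span k
    {z | ∃ p q n, n ∈ coinv k H P δ ∧ z = (p * n) ⊗ₜ[k] q - p ⊗ₜ[k] (n * q)}

/-- The (pre-quotient) canonical Galois map `p ⊗ q ↦ p₍₋₁₎ ⊗ p₍₀₎ q`. -/
def canP (δ : P →ₗ[k] H ⊗[k] P) : P ⊗[k] P →ₗ[k] H ⊗[k] P :=
  TensorProduct.map LinearMap.id (LinearMap.mul' k P)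
    ∘ₗ (TensorProduct.assoc k H P P).toLinearMap
    ∘ₗ TensorProduct.map δ LinearMap.id

end Galois

namespace CleftAux

variable {k : Type*} [Field k] {H : Type*} [Ring H] [HopfAlgebra k H]
variable {A : Type*} [Ring A] [Algebra k A]
variable {B : Type*} [Ring B] [Algebra k B]
variable {P : Type*} [Ring P] [Algebra k P]

open Coalgebra LinearMap

/-- Convolution product on `Hom(H, A)`. -/
def conv (f g : H →ₗ[k] A) : H →ₗ[k] A :=
  mul' k A ∘ₗ TensorProduct.map f g ∘ₗ comul

/-- Convolution unit. -/
def cunit : H →ₗ[k] A := Algebra.linearMap k A ∘ₗ Coalgebra.counit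

lemma struct_assoc {M : Type*} [AddCommGroup M] [Module k M]
    (f g : H →ₗ[k] A) (v : M →ₗ[k] A) :
    mul' k A ∘ₗ TensorProduct.map (mul' k A ∘ₗ TensorProduct.map f g) v
        ∘ₗ (TensorProduct.assoc k H H M).symm.toLinearMap
      = mul' k A ∘ₗ TensorProduct.map f (mul' k A ∘ₗ TensorProduct.map g v) := by
  ext h h' m
  simp [mul_assoc]

lemma conv_assoc (f g l : H →ₗ[k] A) : conv (conv f g) l = conv f (conv g l) := by
  have coas := Coalgebra.coassoc_symm (R := k) (A := H)
  have key2 := congrArg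
    (fun t => t ∘ₗ ((Coalgebra.comul (R := k) (A := H)).lTensor H ∘ₗ Coalgebra.comul))
    (struct_assoc (k := k) (H := H) f g l)
  simp only [LinearMap.comp_assoc] at key2
  simp only [conv]
  rw [show TensorProduct.map (mul' k A ∘ₗ TensorProduct.map f g ∘ₗ Coalgebra.comul) l
      = TensorProduct.map (mul' k A ∘ₗ TensorProduct.map f g) l
          ∘ₗ (Coalgebra.comul (R := k) (A := H)).rTensor H from by
    rw [map_comp_rTensor, LinearMap.comp_assoc]]
  rw [show TensorProduct.map f (mul' k A ∘ₗ TensorProduct.map g l ∘ₗ Coalgebra.comul)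
      = TensorProduct.map f (mul' k A ∘ₗ TensorProduct.map g l)
          ∘ₗ (Coalgebra.comul (R := k) (A := H)).lTensor H from by
    rw [map_comp_lTensor, LinearMap.comp_assoc]]
  simp only [LinearMap.comp_assoc]
  rw [← coas]
  exact key2

lemma conv_cunit_right (f : H →ₗ[k] A) : conv f cunit = f := by
  have e : TensorProduct.map f (cunit (k := k) (A := A))
      = TensorProduct.map f (Algebra.linearMap k A) ∘ₗ (counit (R := k) (A := H)).lTensor H := by
    rw [map_comp_lTensor]; rfl
    
  unfold conv
  rw [e, LinearMap.comp_assoc, lTensor_counit_comp_comul]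
  ext h
  simp

lemma conv_cunit_left (f : H →ₗ[k] A) : conv cunit f = f := by
  have e : TensorProduct.map (cunit (k := k) (A := A)) f
      = TensorProduct.map (Algebra.linearMap k A) f ∘ₗ (counit (R := k) (A := H)).rTensor H := by
    rw [map_comp_rTensor]; rfl
  unfold conv
  rw [e, LinearMap.comp_assoc, rTensor_counit_comp_comul]
  ext h
  simp

lemma comp_conv (φ : A →ₗ[k] B)
    (hφ : φ ∘ₗ mul' k A = mul' k B ∘ₗ TensorProduct.map φ φ) (f g : H →ₗ[k] A) :
    φ ∘ₗ conv f g = conv (φ ∘ₗ f) (φ ∘ₗ g) := by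
  simp only [conv, ← LinearMap.comp_assoc, hφ]
  rw [LinearMap.comp_assoc (TensorProduct.map f g) _ _, ← TensorProduct.map_comp]

lemma comp_cunit (φ : A →ₗ[k] B)
    (hφu : φ ∘ₗ Algebra.linearMap k A = Algebra.linearMap k B) :
    φ ∘ₗ (cunit (k := k) (H := H) (A := A)) = cunit := by
  unfold cunit
  rw [← LinearMap.comp_assoc, hφu]

/-- The "action" of `Hom(H,A)` on maps `P → A` coming from a comodule structure. -/
def cact (δ : P →ₗ[k] H ⊗[k] P) (f : H →ₗ[k] A) (v : P →ₗ[k] A) : P →ₗ[k] A :=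
  mul' k A ∘ₗ TensorProduct.map f v ∘ₗ δ

lemma cact_cact (δ : P →ₗ[k] H ⊗[k] P)
    (hco : (TensorProduct.map (Coalgebra.comul (R := k) (A := H)) LinearMap.id) ∘ₗ δ
      = (TensorProduct.assoc k H H P).symm.toLinearMap
          ∘ₗ (TensorProduct.map LinearMap.id δ) ∘ₗ δ)
    (f g : H →ₗ[k] A) (v : P →ₗ[k] A) :
    cact δ f (cact δ g v) = cact δ (conv f g) v := by
  have key2 := congrArg (fun t => t ∘ₗ (TensorProduct.map LinearMap.id δ ∘ₗ δ))
    (struct_assoc (k := k) (H := H) (M := P) f g v)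
  simp only [LinearMap.comp_assoc] at key2
  simp only [cact, conv]
  rw [show TensorProduct.map f (mul' k A ∘ₗ TensorProduct.map g v ∘ₗ δ)
      = TensorProduct.map f (mul' k A ∘ₗ TensorProduct.map g v)
          ∘ₗ TensorProduct.map LinearMap.id δ from by
    rw [← TensorProduct.map_comp, LinearMap.comp_id, LinearMap.comp_assoc]]
  rw [show TensorProduct.map (mul' k A ∘ₗ TensorProduct.map f g ∘ₗ Coalgebra.comul) v
      = TensorProduct.map (mul' k A ∘ₗ TensorProduct.map f g) v
          ∘ₗ TensorProduct.map (Coalgebra.comul (R := k) (A := H)) LinearMap.id from by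
    rw [← TensorProduct.map_comp, LinearMap.comp_id, LinearMap.comp_assoc]]
  simp only [LinearMap.comp_assoc] at hco ⊢
  rw [hco]
  exact key2.symm

lemma cact_cunit (δ : P →ₗ[k] H ⊗[k] P)
    (hcounit : ∀ p : P,
      (TensorProduct.lid k P)
        ((TensorProduct.map (Coalgebra.counit (R := k) (A := H)) LinearMap.id) (δ p)) = p)
    (v : P →ₗ[k] A) : cact δ cunit v = v := by
  have e : TensorProduct.map (cunit (k := k) (H := H) (A := A)) v
      = TensorProduct.map (Algebra.linearMap k A) v
        ∘ₗ TensorProduct.map (Coalgebra.counit (R := k) (A := H)) LinearMap.id := by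
    rw [← TensorProduct.map_comp, LinearMap.comp_id]; rfl
  unfold cact
  rw [e]
  ext p
  have hp : (TensorProduct.map (Coalgebra.counit (R := k) (A := H)) LinearMap.id) (δ p)
      = (1 : k) ⊗ₜ[k] p := by
    apply (TensorProduct.lid k P).injective
    rw [hcounit p]
    simp
  simp [hp]

lemma comp_cact (δ : P →ₗ[k] H ⊗[k] P) (φ : A →ₗ[k] B)
    (hφ : φ ∘ₗ mul' k A = mul' k B ∘ₗ TensorProduct.map φ φ)
    (f : H →ₗ[k] A) (v : P →ₗ[k] A) :
    φ ∘ₗ cact δ f v = cact δ (φ ∘ₗ f) (φ ∘ₗ v) := by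
  simp only [cact, ← LinearMap.comp_assoc, hφ]
  rw [LinearMap.comp_assoc (TensorProduct.map f v) _ _, ← TensorProduct.map_comp]

end CleftAux

open CleftAux Coalgebra LinearMap in
/-- A cleft extension is Galois: if `γ : H → P` is a unital, colinear,
convolution-invertible cleaving map, then `N ⊆ P` is a left `H`-Galois extension with
translation map `τ(h) = γ(h₁) ⊗_N γ⁻¹(h₂)`. -/
theorem stmt13 (k : Type*) [Field k] (H : Type*) [Ring H] [HopfAlgebra k H]
    (P : Type*) [Ring P] [Algebra k P]
    (δ : P →ₗ[k] H ⊗[k] P)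
    (hcoassoc : (TensorProduct.map (Coalgebra.comul (R := k) (A := H)) LinearMap.id) ∘ₗ δ
      = (TensorProduct.assoc k H H P).symm.toLinearMap
          ∘ₗ (TensorProduct.map LinearMap.id δ) ∘ₗ δ)
    (hcounit : ∀ p : P,
      (TensorProduct.lid k P)
        ((TensorProduct.map (Coalgebra.counit (R := k) (A := H)) LinearMap.id) (δ p)) = p)
    (hmulc : ∀ p q : P, δ (p * q) = δ p * δ q)
    (hone : δ 1 = 1)
    -- the cleaving map and its convolution inverse
    (γ γ' : H →ₗ[k] P)
    (hγone : γ 1 = 1)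
    (hcolin : δ ∘ₗ γ
      = TensorProduct.map LinearMap.id γ ∘ₗ (Coalgebra.comul (R := k) (A := H)))
    (hconv₁ : (LinearMap.mul' k P) ∘ₗ TensorProduct.map γ γ'
          ∘ₗ (Coalgebra.comul (R := k) (A := H))
        = (Algebra.linearMap k P) ∘ₗ (Coalgebra.counit (R := k) (A := H)))
    (hconv₂ : (LinearMap.mul' k P) ∘ₗ TensorProduct.map γ' γ
          ∘ₗ (Coalgebra.comul (R := k) (A := H))
        = (Algebra.linearMap k P) ∘ₗ (Coalgebra.counit (R := k) (A := H)))
    -- the canonical map descended to `P ⊗_N P`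
    (canQ : (P ⊗[k] P) ⧸ relN k H P δ →ₗ[k] H ⊗[k] P)
    (hcanQ : ∀ x : P ⊗[k] P, canQ (Submodule.Quotient.mk x) = canP k H P δ x) :
    Function.Bijective canQ
      ∧ ∀ h : H, canQ (Submodule.Quotient.mk
          ((TensorProduct.map γ γ') (Coalgebra.comul (R := k) (A := H) h)))
        = h ⊗ₜ[k] (1 : P) := by
  classical
  set S : H →ₗ[k] H := HopfAlgebra.antipode (R := k) with hS
  set ιH : H →ₗ[k] H ⊗[k] P := (TensorProduct.mk k H P).flip 1 with hιH
  set ιP : P →ₗ[k] H ⊗[k] P := TensorProduct.mk k H P 1 with hιP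
  set ι₁ : P →ₗ[k] P ⊗[k] P := (TensorProduct.mk k P P).flip 1 with hι₁
  set ι₂ : P →ₗ[k] P ⊗[k] P := TensorProduct.mk k P P 1 with hι₂
  set β : H →ₗ[k] P ⊗[k] P :=
    TensorProduct.map γ γ' ∘ₗ Coalgebra.comul (R := k) (A := H) with hβ
  set F : P →ₗ[k] P := cact δ γ' LinearMap.id with hF
  set inv₀ : H ⊗[k] P →ₗ[k] P ⊗[k] P :=
    mul' k (P ⊗[k] P) ∘ₗ TensorProduct.map β ι₂ with hinv₀
  rw [hβ] at hconv₁
  -- multiplicativity / unit facts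
  have hδmul : δ ∘ₗ mul' k P = mul' k (H ⊗[k] P) ∘ₗ TensorProduct.map δ δ := by
    ext p q; simp [hmulc]
  have hιHmul : ιH ∘ₗ mul' k H = mul' k (H ⊗[k] P) ∘ₗ TensorProduct.map ιH ιH := by
    ext a b; simp [hιH, Algebra.TensorProduct.tmul_mul_tmul]
  have hιPmul : ιP ∘ₗ mul' k P = mul' k (H ⊗[k] P) ∘ₗ TensorProduct.map ιP ιP := by
    ext a b; simp [hιP, Algebra.TensorProduct.tmul_mul_tmul]
  have hι₂mul : ι₂ ∘ₗ mul' k P = mul' k (P ⊗[k] P) ∘ₗ TensorProduct.map ι₂ ι₂ := by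
    ext a b; simp [hι₂, Algebra.TensorProduct.tmul_mul_tmul]
  have hδu : δ ∘ₗ Algebra.linearMap k P = Algebra.linearMap k (H ⊗[k] P) := by
    apply LinearMap.ext_ring
    simp [hone, Algebra.TensorProduct.one_def]
  have hιHu : ιH ∘ₗ Algebra.linearMap k H = Algebra.linearMap k (H ⊗[k] P) := by
    apply LinearMap.ext_ring
    simp [hιH, Algebra.TensorProduct.one_def]
  have hιPu : ιP ∘ₗ Algebra.linearMap k P = Algebra.linearMap k (H ⊗[k] P) := by
    apply LinearMap.ext_ring
    simp [hιP, Algebra.TensorProduct.one_def]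
  have hι₂u : ι₂ ∘ₗ Algebra.linearMap k P = Algebra.linearMap k (P ⊗[k] P) := by
    apply LinearMap.ext_ring
    simp [hι₂, Algebra.TensorProduct.one_def]
  -- structural identities
  have id_HP : mul' k (H ⊗[k] P) ∘ₗ TensorProduct.map ιH ιP = LinearMap.id := by
    ext h p; simp [hιH, hιP, Algebra.TensorProduct.tmul_mul_tmul]
  have id_PP : mul' k (P ⊗[k] P) ∘ₗ TensorProduct.map ι₁ ι₂ = LinearMap.id := by
    ext a b; simp [hι₁, hι₂, Algebra.TensorProduct.tmul_mul_tmul]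
  have hδcact : cact δ ιH ιP = δ := by
    unfold cact
    rw [← LinearMap.comp_assoc, id_HP, LinearMap.id_comp]
  -- convolution identities
  have convγγ' : conv γ γ' = cunit := by unfold conv cunit; exact hconv₁
  have convγ'γ : conv γ' γ = cunit := by unfold conv cunit; exact hconv₂
  have f_eq : δ ∘ₗ γ = conv ιH (ιP ∘ₗ γ) := by
    have e : TensorProduct.map ιH (ιP ∘ₗ γ)
        = TensorProduct.map ιH ιP ∘ₗ TensorProduct.map LinearMap.id γ := by
      rw [← TensorProduct.map_comp, LinearMap.comp_id]
    unfold conv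
    rw [e, hcolin]
    simp only [← LinearMap.comp_assoc, id_HP, LinearMap.id_comp]
  have β_eq : β = conv (ι₁ ∘ₗ γ) (ι₂ ∘ₗ γ') := by
    have e : TensorProduct.map (ι₁ ∘ₗ γ) (ι₂ ∘ₗ γ')
        = TensorProduct.map ι₁ ι₂ ∘ₗ TensorProduct.map γ γ' := by
      rw [← TensorProduct.map_comp]
    unfold conv
    rw [hβ, e]
    simp only [← LinearMap.comp_assoc, id_PP, LinearMap.id_comp]
  have fg : conv (δ ∘ₗ γ) (δ ∘ₗ γ') = cunit := by
    rw [← comp_conv δ hδmul, convγγ', comp_cunit δ hδu]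
  have SιH : conv (ιH ∘ₗ S) ιH = cunit := by
    have hanti : conv S LinearMap.id = cunit (k := k) (H := H) (A := H) := by
      unfold conv cunit
      exact HopfAlgebra.mul_antipode_rTensor_comul (R := k) (A := H)
    calc conv (ιH ∘ₗ S) ιH = conv (ιH ∘ₗ S) (ιH ∘ₗ LinearMap.id) := by rw [LinearMap.comp_id]
      _ = ιH ∘ₗ conv S LinearMap.id := (comp_conv ιH hιHmul S LinearMap.id).symm
      _ = ιH ∘ₗ cunit := by rw [hanti]
      _ = cunit := comp_cunit ιH hιHu
  have g_eq : δ ∘ₗ γ' = conv (ιP ∘ₗ γ') (ιH ∘ₗ S) := by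
    have hD'f : conv (conv (ιP ∘ₗ γ') (ιH ∘ₗ S)) (δ ∘ₗ γ) = cunit := by
      rw [f_eq, conv_assoc, ← conv_assoc (ιH ∘ₗ S) ιH (ιP ∘ₗ γ), SιH, conv_cunit_left,
        ← comp_conv ιP hιPmul, convγ'γ, comp_cunit ιP hιPu]
    calc δ ∘ₗ γ' = conv cunit (δ ∘ₗ γ') := (conv_cunit_left _).symm
      _ = conv (conv (conv (ιP ∘ₗ γ') (ιH ∘ₗ S)) (δ ∘ₗ γ)) (δ ∘ₗ γ') := by rw [hD'f]
      _ = conv (conv (ιP ∘ₗ γ') (ιH ∘ₗ S)) (conv (δ ∘ₗ γ) (δ ∘ₗ γ')) := conv_assoc _ _ _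
      _ = conv (conv (ιP ∘ₗ γ') (ιH ∘ₗ S)) cunit := by rw [fg]
      _ = conv (ιP ∘ₗ γ') (ιH ∘ₗ S) := conv_cunit_right _
  -- coinvariance of F
  have hδF : δ ∘ₗ F = ιP ∘ₗ F := by
    have e1 : δ ∘ₗ F = cact δ (δ ∘ₗ γ') δ := by
      rw [hF, comp_cact δ δ hδmul, LinearMap.comp_id]
    have e2 : cact δ (ιH ∘ₗ S) δ = ιP := by
      have h3 := cact_cact δ hcoassoc (ιH ∘ₗ S) ιH ιP
      rw [hδcact] at h3
      rw [h3, SιH, cact_cunit δ hcounit]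
    rw [e1, g_eq, ← e2, ← cact_cact δ hcoassoc, e2, hF,
      comp_cact δ ιP hιPmul, LinearMap.comp_id]
  have hFcoinv : ∀ x : P, F x ∈ coinv k H P δ := by
    intro x
    have h := LinearMap.congr_fun hδF x
    simpa [coinv, hιP] using h
  -- canonical map facts
  have canP_eq : canP k H P δ = mul' k (H ⊗[k] P) ∘ₗ TensorProduct.map δ ιP := by
    have e : TensorProduct.map δ ιP
        = TensorProduct.map LinearMap.id ιP ∘ₗ TensorProduct.map δ LinearMap.id := by
      rw [← TensorProduct.map_comp, LinearMap.id_comp, LinearMap.comp_id]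
    have struct : TensorProduct.map (LinearMap.id : H →ₗ[k] H) (mul' k P)
          ∘ₗ (TensorProduct.assoc k H P P).toLinearMap
        = mul' k (H ⊗[k] P)
          ∘ₗ TensorProduct.map (LinearMap.id : H ⊗[k] P →ₗ[k] H ⊗[k] P) ιP := by
      ext h p q
      simp [hιP, Algebra.TensorProduct.tmul_mul_tmul]
    unfold canP
    rw [e]
    simp only [← LinearMap.comp_assoc]
    rw [struct]
  have canβ : canP k H P δ ∘ₗ β = ιH := by
    have e : TensorProduct.map δ ιP ∘ₗ TensorProduct.map γ γ'
        = TensorProduct.map (δ ∘ₗ γ) (ιP ∘ₗ γ') := by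
      rw [← TensorProduct.map_comp]
    have e2 : canP k H P δ ∘ₗ β = conv (δ ∘ₗ γ) (ιP ∘ₗ γ') := by
      unfold conv
      rw [canP_eq, hβ, ← e]
      simp only [← LinearMap.comp_assoc]
    rw [e2, f_eq, conv_assoc, ← comp_conv ιP hιPmul, convγγ', comp_cunit ιP hιPu,
      conv_cunit_right]
  have M1 : canP k H P δ ∘ₗ (mul' k (P ⊗[k] P) ∘ₗ TensorProduct.map LinearMap.id ι₂)
      = mul' k (H ⊗[k] P) ∘ₗ TensorProduct.map (canP k H P δ) ιP := by
    rw [canP_eq]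
    ext x y q
    simp [hιP, hι₂, Algebra.TensorProduct.tmul_mul_tmul, mul_assoc]
  have I1 : canP k H P δ ∘ₗ inv₀ = LinearMap.id := by
    have e : TensorProduct.map β ι₂
        = TensorProduct.map LinearMap.id ι₂ ∘ₗ TensorProduct.map β LinearMap.id := by
      rw [← TensorProduct.map_comp, LinearMap.id_comp, LinearMap.comp_id]
    have e2 : TensorProduct.map (canP k H P δ) ιP ∘ₗ TensorProduct.map β LinearMap.id
        = TensorProduct.map (canP k H P δ ∘ₗ β) ιP := by
      rw [← TensorProduct.map_comp, LinearMap.comp_id]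
    have M1' := M1
    simp only [← LinearMap.comp_assoc] at M1'
    rw [hinv₀, e]
    simp only [← LinearMap.comp_assoc]
    rw [M1', LinearMap.comp_assoc, e2, canβ, id_HP]
  have C3 : mul' k P ∘ₗ TensorProduct.map γ F ∘ₗ δ = LinearMap.id := by
    have h1 : cact δ γ F = cact δ (conv γ γ') LinearMap.id := by
      rw [hF]; exact cact_cact δ hcoassoc γ γ' LinearMap.id
    have h2 : cact δ γ F = LinearMap.id := by
      rw [h1, convγγ', cact_cunit δ hcounit]
    rw [← h2]
    unfold cact
    rfl
  have C1' : inv₀ ∘ₗ δ = TensorProduct.map γ F ∘ₗ δ := by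
    have lhs : inv₀ ∘ₗ δ = cact δ β ι₂ := by
      unfold cact
      rw [hinv₀, LinearMap.comp_assoc]
    have rhs : TensorProduct.map γ F ∘ₗ δ = cact δ (ι₁ ∘ₗ γ) (ι₂ ∘ₗ F) := by
      have e : TensorProduct.map (ι₁ ∘ₗ γ) (ι₂ ∘ₗ F)
          = TensorProduct.map ι₁ ι₂ ∘ₗ TensorProduct.map γ F := by
        rw [← TensorProduct.map_comp]
      unfold cact
      rw [e]
      simp only [← LinearMap.comp_assoc, id_PP, LinearMap.id_comp]
    have mid : cact δ β ι₂ = cact δ (ι₁ ∘ₗ γ) (ι₂ ∘ₗ F) := by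
      have inner : cact δ (ι₂ ∘ₗ γ') ι₂ = ι₂ ∘ₗ F := by
        rw [hF, comp_cact δ ι₂ hι₂mul, LinearMap.comp_id]
      rw [β_eq, ← cact_cact δ hcoassoc, inner]
    rw [lhs, mid, rhs]
  -- elementwise facts
  have inv₀_tmul : ∀ (h : H) (r : P), inv₀ (h ⊗ₜ[k] r) = β h * ((1 : P) ⊗ₜ[k] r) := by
    intro h r
    simp [hinv₀, hι₂]
  have inv₀_mul : ∀ (x : H ⊗[k] P) (q : P),
      inv₀ (x * ((1 : H) ⊗ₜ[k] q)) = inv₀ x * ((1 : P) ⊗ₜ[k] q) := by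
    intro x q
    induction x using TensorProduct.induction_on with
    | zero => simp
    | tmul h r =>
      rw [Algebra.TensorProduct.tmul_mul_tmul, mul_one, inv₀_tmul, inv₀_tmul, mul_assoc,
        Algebra.TensorProduct.tmul_mul_tmul, one_mul]
    | add x y hx hy => simp only [add_mul, map_add, hx, hy]
  have genrel : ∀ (u : H ⊗[k] P) (q : P),
      (TensorProduct.map γ F) u * ((1 : P) ⊗ₜ[k] q)
        - (mul' k P ((TensorProduct.map γ F) u)) ⊗ₜ[k] q ∈ relN k H P δ := by
    intro u q
    induction u using TensorProduct.induction_on with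
    | zero =>
      simp only [map_zero, zero_mul, TensorProduct.zero_tmul, sub_zero]
      exact Submodule.zero_mem _
    | tmul a r =>
      have hmem : (γ a * F r) ⊗ₜ[k] q - (γ a) ⊗ₜ[k] (F r * q) ∈ relN k H P δ :=
        Submodule.subset_span ⟨γ a, q, F r, hFcoinv r, rfl⟩
      have e : (TensorProduct.map γ F) (a ⊗ₜ[k] r) * ((1 : P) ⊗ₜ[k] q)
          - (mul' k P ((TensorProduct.map γ F) (a ⊗ₜ[k] r))) ⊗ₜ[k] q
          = -((γ a * F r) ⊗ₜ[k] q - (γ a) ⊗ₜ[k] (F r * q)) := by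
        simp only [TensorProduct.map_tmul, LinearMap.mul'_apply,
          Algebra.TensorProduct.tmul_mul_tmul, mul_one]
        abel
      rw [e]
      exact Submodule.neg_mem _ hmem
    | add x y hx hy =>
      have e : (TensorProduct.map γ F) (x + y) * ((1 : P) ⊗ₜ[k] q)
          - (mul' k P ((TensorProduct.map γ F) (x + y))) ⊗ₜ[k] q
          = ((TensorProduct.map γ F) x * ((1 : P) ⊗ₜ[k] q)
              - (mul' k P ((TensorProduct.map γ F) x)) ⊗ₜ[k] q)
            + ((TensorProduct.map γ F) y * ((1 : P) ⊗ₜ[k] q)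
              - (mul' k P ((TensorProduct.map γ F) y)) ⊗ₜ[k] q) := by
        simp only [map_add, add_mul, TensorProduct.add_tmul]
        abel
      rw [e]
      exact Submodule.add_mem _ hx hy
  have canP_tmul : ∀ (p q : P), canP k H P δ (p ⊗ₜ[k] q) = δ p * ((1 : H) ⊗ₜ[k] q) := by
    intro p q
    rw [canP_eq]
    simp [hιP]
  have inj_key : ∀ z : P ⊗[k] P, inv₀ (canP k H P δ z) - z ∈ relN k H P δ := by
    intro z
    induction z using TensorProduct.induction_on with
    | zero =>
      simp only [map_zero, sub_zero]
      exact Submodule.zero_mem _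
    | tmul p q =>
      have e1 : inv₀ (canP k H P δ (p ⊗ₜ[k] q))
          = (TensorProduct.map γ F) (δ p) * ((1 : P) ⊗ₜ[k] q) := by
        rw [canP_tmul, inv₀_mul]
        have h := LinearMap.congr_fun C1' p
        simp only [LinearMap.comp_apply] at h
        rw [h]
      have e2 : mul' k P ((TensorProduct.map γ F) (δ p)) = p := by
        have h := LinearMap.congr_fun C3 p
        simpa using h
      have h := genrel (δ p) q
      rw [e2] at h
      rwa [e1]
    | add x y hx hy =>
      have e : inv₀ (canP k H P δ (x + y)) - (x + y)
          = (inv₀ (canP k H P δ x) - x) + (inv₀ (canP k H P δ y) - y) := by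
        simp only [map_add]
        abel
      rw [e]
      exact Submodule.add_mem _ hx hy
  -- conclusion
  have surj : Function.Surjective canQ := by
    intro x
    refine ⟨Submodule.Quotient.mk (inv₀ x), ?_⟩
    rw [hcanQ]
    have h := LinearMap.congr_fun I1 x
    simpa using h
  have linv : ∀ y, Submodule.Quotient.mk (p := relN k H P δ) (inv₀ (canQ y)) = y := by
    intro y
    obtain ⟨z, rfl⟩ := Submodule.Quotient.mk_surjective _ y
    rw [hcanQ]
    exact (Submodule.Quotient.eq _).2 (inj_key z)
  have inj : Function.Injective canQ := by
    intro y y' hyy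
    have h1 := linv y
    rw [hyy, linv y'] at h1
    exact h1.symm
  refine ⟨⟨inj, surj⟩, ?_⟩
  intro h
  rw [hcanQ]
  have hb : (TensorProduct.map γ γ') (Coalgebra.comul (R := k) (A := H) h) = β h := by
    rw [hβ]; rfl
  rw [hb]
  have h2 := LinearMap.congr_fun canβ h
  simp only [LinearMap.comp_apply] at h2
  rw [h2, hιH]
  rfl
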